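/- Let G be a convex bipartite graph satisfying Property B with a Hamiltonian path P whose X-vertices appear (as an ordered subsequence of P) in the convex order, and let 1 < p < q < n. If neither x_p nor x_q is an endpoint or a penultimate vertex of P, then P contains at most q − p vertices of N_G[X_{p..q}]. -/

import Mathlib

open Finset SimpleGraph

/-- A convex bipartite graph with parts `X = Fin n` (with its natural order giving the
convex ordering) and `Y`: each `y : Y` has a consecutive neighborhood in `Fin n`. -/
structure ConvexBip (n : ℕ) (Y : Type*) where
  adj : Fin n → Y → Prop
  convex : ∀ (y : Y) (i₁ i₂ i₃ : Fin n),
    i₁ ≤ i₂ → i₂ ≤ i₃ → adj i₁ y → adj i₃ y → adj i₂ y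

namespace ConvexBip

variable {n : ℕ} {Y : Type*}

/-- The underlying bipartite simple graph on `Fin n ⊕ Y`. -/
def toGraph (G : ConvexBip n Y) : SimpleGraph (Fin n ⊕ Y) where
  Adj u v := (∃ i y, u = Sum.inl i ∧ v = Sum.inr y ∧ G.adj i y) ∨
             (∃ i y, u = Sum.inr y ∧ v = Sum.inl i ∧ G.adj i y)
  symm := ⟨by rintro u v (⟨i, y, rfl, rfl, h⟩ | ⟨i, y, rfl, rfl, h⟩)
              · exact Or.inr ⟨i, y, rfl, rfl, h⟩
              · exact Or.inl ⟨i, y, rfl, rfl, h⟩⟩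
  loopless := ⟨by rintro u (⟨i, y, rfl, h, _⟩ | ⟨i, y, rfl, h, _⟩) <;> simp_all⟩

/-- `N_G[X_{p..q}]`: the set of `y ∈ Y` whose whole neighborhood lies in `{x_p, …, x_q}`. -/
def NIn (G : ConvexBip n Y) (p q : Fin n) : Set Y :=
  {y | ∀ i, G.adj i y → p ≤ i ∧ i ≤ q}

/-- `N'_G[X_{p..q}]`: the set of `y ∈ Y` having at least two neighbors in `{x_p, …, x_q}`. -/
noncomputable def NIn' (G : ConvexBip n Y) (p q : Fin n) : Set Y :=
  {y | 2 ≤ {i : Fin n | G.adj i y ∧ p ≤ i ∧ i ≤ q}.ncard}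

/-- Degree of a vertex `y ∈ Y`. -/
noncomputable def degY (G : ConvexBip n Y) (y : Y) : ℕ := {i : Fin n | G.adj i y}.ncard

/-- Property A. -/
def PropertyA (G : ConvexBip n Y) : Prop :=
  (∀ p q : Fin n, p < q →
      ((p.val = 0 ∧ q.val < n - 1) ∨ (0 < p.val ∧ q.val = n - 1) ∨
        (0 < p.val ∧ q.val < n - 1)) →
      (G.NIn p q).ncard ≤ q.val - p.val) ∧
  (∀ (k : ℕ) (p q : Fin k → Fin n), 1 ≤ k → k ≤ n - 1 →
      (∀ i, p i < q i) → (∀ i i' : Fin k, i < i' → q i ≤ p i') →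
      (∑ i, ((q i).val - (p i).val)) ≤ (⋃ i, G.NIn' (p i) (q i)).ncard) ∧
  (∀ hn : 0 < n,
      (G.NIn ⟨0, hn⟩ ⟨n - 1, by omega⟩).ncard = n ∧
      (G.NIn' ⟨0, hn⟩ ⟨n - 1, by omega⟩).ncard = n)

/-- Property B. -/
def PropertyB (G : ConvexBip n Y) : Prop :=
  (∀ p q : Fin n, p < q →
      ((p.val = 0 ∧ q.val < n - 1) ∨ (0 < p.val ∧ q.val = n - 1) ∨
        (0 < p.val ∧ q.val < n - 1)) →
      (G.NIn p q).ncard ≤ q.val - p.val + 1) ∧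
  (∀ hn : 0 < n, (G.NIn ⟨0, hn⟩ ⟨n - 1, by omega⟩).ncard ≤ n + 1) ∧
  (∀ (k : ℕ) (p q : Fin k → Fin n), 1 ≤ k → k ≤ n - 1 →
      (∀ i, p i < q i) → (∀ i i' : Fin k, i < i' → q i ≤ p i') →
      (∑ i, ((q i).val - (p i).val)) ≤ (⋃ i, G.NIn' (p i) (q i)).ncard) ∧
  ({y : Y | G.degY y = 1}.ncard ≤ 2 ∧
    (2 ≤ n → ∀ (i : Fin n) (y y' : Y), y ≠ y' → G.degY y = 1 → G.degY y' = 1 →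
      G.adj i y → G.adj i y' → False))

/-- The interval `X_{p..q}` is maximal: `|N_G[X_{p..q}]| = q - p + 1` and no strictly
larger interval (within indices 2..n-1) has the analogous property. -/
def IsMaximalInt (G : ConvexBip n Y) (p q : Fin n) : Prop :=
  (G.NIn p q).ncard = q.val - p.val + 1 ∧
  ¬ ∃ p' q' : Fin n, 0 < p'.val ∧ q'.val < n - 1 ∧ p' ≤ p ∧ q ≤ q' ∧
      (p' < p ∨ q < q') ∧ (G.NIn p' q').ncard = q'.val - p'.val + 1

/-- Monotone convex bipartite graph. -/
def IsMonotone (G : ConvexBip n Y) : Prop :=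
  G.PropertyB ∧
  (¬ ∃ (y : Y) (k : Fin n), G.degY y = 1 ∧ G.adj k y ∧ 0 < k.val ∧ k.val < n - 1) ∧
  (¬ ∃ p q : Fin n, 0 < p.val ∧ p < q ∧ q.val < n - 1 ∧ G.IsMaximalInt p q)

/-- Non-monotone convex bipartite graph (satisfying Property B). -/
def IsNonMonotone (G : ConvexBip n Y) : Prop :=
  G.PropertyB ∧
  ((∃ (y : Y) (k : Fin n), G.degY y = 1 ∧ G.adj k y ∧ 0 < k.val ∧ k.val < n - 1) ∨
   (∃ p q : Fin n, 0 < p.val ∧ p < q ∧ q.val < n - 1 ∧ G.IsMaximalInt p q))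

/-- The interval graph obtained from `G`: keep all edges of `G` and make two distinct
`Y`-vertices adjacent whenever their neighborhoods in `X` intersect. -/
def intervalGraph (G : ConvexBip n Y) : SimpleGraph (Fin n ⊕ Y) where
  Adj u v := G.toGraph.Adj u v ∨
    (∃ y y', u = Sum.inr y ∧ v = Sum.inr y' ∧ y ≠ y' ∧ ∃ i, G.adj i y ∧ G.adj i y')
  symm := ⟨by
    rintro u v (h | ⟨y, y', rfl, rfl, hne, i, h1, h2⟩)
    · exact Or.inl h.symm
    · exact Or.inr ⟨y', y, rfl, rfl, hne.symm, i, h2, h1⟩⟩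
  loopless := ⟨by
    rintro u (h | ⟨y, y', rfl, h, hne, _⟩)
    · exact G.toGraph.loopless.irrefl u h
    · exact hne (Sum.inr.inj h)⟩

/-- `G` has a Hamiltonian cycle. -/
def HasHamCycle {V : Type*} [DecidableEq V] (H : SimpleGraph V) : Prop :=
  ∃ (v : V) (c : H.Walk v v), c.IsHamiltonianCycle

/-- `G` has a Hamiltonian path. -/
def HasHamPath {V : Type*} [DecidableEq V] (H : SimpleGraph V) : Prop :=
  ∃ (u v : V) (p : H.Walk u v), p.IsHamiltonian

/-- A maximal clique of a simple graph. -/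
def IsMaxClique {V : Type*} (H : SimpleGraph V) (s : Set V) : Prop :=
  H.IsClique s ∧ ∀ t : Set V, H.IsClique t → s ⊆ t → s = t

end ConvexBip

/-!
Every `y ∈ N_G[X_{p..q}]` is an inner vertex of `P`: were it the last vertex, `x_{n-1}` would
come before its predecessor `x_i` with `i ≤ q < n - 1`, and were it the first, `x_0` would come
after its successor `x_j` with `j ≥ p > 0`. So `y` is flanked by `x_i` and `x_j` with
`p ≤ i < j ≤ q`, and `y ↦ j` is injective because `P` is a path;
hence `|N_G[X_{p..q}]| ≤ q - p`.
-/

theorem List.Pairwise.rel_of_getElem_eq_inl {α β : Type*} {R : α → α → Prop}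
    {l : List (α ⊕ β)} (h : (l.filterMap Sum.getLeft?).Pairwise R) {a b : ℕ} (hab : a < b)
    (hb : b < l.length) {i j : α} (hi : l[a] = Sum.inl i) (hj : l[b] = Sum.inl j) : R i j :=
  List.pairwise_iff_getElem.mp (List.pairwise_filterMap.mp h) a b (hab.trans hb) hb hab
    i (by simp [hi]) j (by simp [hj])

theorem List.Pairwise.le_of_getElem_eq_inl {α β : Type*} [Preorder α] {l : List (α ⊕ β)}
    (h : (l.filterMap Sum.getLeft?).Pairwise (· < ·)) {a b : ℕ} (hab : a ≤ b)
    (hb : b < l.length) {i j : α} (hi : l[a] = Sum.inl i) (hj : l[b] = Sum.inl j) : i ≤ j := by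
  rcases hab.lt_or_eq with hab | rfl
  · exact (h.rel_of_getElem_eq_inl hab hb hi hj).le
  · exact (Sum.inl_injective (hi.symm.trans hj)).le

namespace ConvexBip

variable {n : ℕ} {Y : Type*} {G : ConvexBip n Y}

theorem exists_eq_inl_of_toGraph_adj_inr {y : Y} {w : Fin n ⊕ Y}
    (h : G.toGraph.Adj (Sum.inr y) w) : ∃ i, w = Sum.inl i ∧ G.adj i y := by
  rcases h with ⟨_, _, h, _, _⟩ | ⟨i, _, h, rfl, hi⟩
  · cases h
  · cases h
    exact ⟨i, rfl, hi⟩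

section Chain

variable {S : List (Fin n ⊕ Y)} {k : ℕ} {y : Y}

theorem exists_getElem_succ_eq_inl (hS : S.IsChain G.toGraph.Adj) (hk : k + 1 < S.length)
    (hy : S[k] = Sum.inr y) : ∃ j, S[k + 1] = Sum.inl j ∧ G.adj j y :=
  exists_eq_inl_of_toGraph_adj_inr (hy ▸ hS.getElem k hk)

theorem exists_getElem_pred_eq_inl (hS : S.IsChain G.toGraph.Adj) (hk : k < S.length)
    (hk0 : 0 < k) (hy : S[k] = Sum.inr y) : ∃ i, S[k - 1] = Sum.inl i ∧ G.adj i y := by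
  have hadj := hS.getElem (k - 1) (by omega)
  simp only [Nat.sub_add_cancel hk0, hy] at hadj
  exact exists_eq_inl_of_toGraph_adj_inr hadj.symm

theorem succ_lt_length_of_getElem_eq_inr (hS : S.IsChain G.toGraph.Adj)
    (horder : (S.filterMap Sum.getLeft?).Pairwise (· < ·)) {hk : k < S.length}
    (hy : S[k] = Sum.inr y) {m : Fin n} (hm : Sum.inl m ∈ S)
    (hym : ∀ i, G.adj i y → i < m) : k + 1 < S.length := by
  obtain ⟨a, ha, hSa⟩ := List.mem_iff_getElem.mp hm
  have hak : a ≠ k := by rintro rfl; simp [hSa] at hy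
  by_contra! hlast
  obtain ⟨i, hi, hyi⟩ := exists_getElem_pred_eq_inl hS hk (by omega) hy
  exact (hym i hyi).not_ge (horder.le_of_getElem_eq_inl (by omega) _ hSa hi)

theorem pos_of_getElem_eq_inr (hS : S.IsChain G.toGraph.Adj)
    (horder : (S.filterMap Sum.getLeft?).Pairwise (· < ·)) {hk : k < S.length}
    (hy : S[k] = Sum.inr y) {m : Fin n} (hm : Sum.inl m ∈ S)
    (hym : ∀ i, G.adj i y → m < i) : 0 < k := by
  obtain ⟨a, ha, hSa⟩ := List.mem_iff_getElem.mp hm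
  have hak : a ≠ k := by rintro rfl; simp [hSa] at hy
  by_contra! hfirst
  obtain rfl : k = 0 := by omega
  obtain ⟨j, hj, hyj⟩ := exists_getElem_succ_eq_inl hS (by omega) hy
  exact (hym j hyj).not_ge (horder.le_of_getElem_eq_inl (by omega) ha hj hSa)

theorem exists_succ_mem_Ioc_of_mem_NIn (hS : S.IsChain G.toGraph.Adj)
    (horder : (S.filterMap Sum.getLeft?).Pairwise (· < ·)) (hall : ∀ w, w ∈ S) {p q : Fin n}
    (hp : 0 < p.val) (hq : q.val < n - 1) (hy : y ∈ G.NIn p q) :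
    ∃ j ∈ Ioc p q, ∃ k, ∃ _ : k + 1 < S.length, S[k] = Sum.inr y ∧ S[k + 1] = Sum.inl j := by
  obtain ⟨k, hk, hSk⟩ := List.mem_iff_getElem.mp (hall (Sum.inr y))
  have hk1 : k + 1 < S.length :=
    succ_lt_length_of_getElem_eq_inr hS horder hSk (hall (Sum.inl ⟨n - 1, by omega⟩))
      fun i hi => (hy i hi).2.trans_lt (Fin.lt_def.mpr hq)
  have hk0 : 0 < k :=
    pos_of_getElem_eq_inr hS horder hSk (hall (Sum.inl ⟨0, by omega⟩))
      fun i hi => (Fin.lt_def.mpr hp).trans_le (hy i hi).1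
  obtain ⟨i, hi, hyi⟩ := exists_getElem_pred_eq_inl hS hk hk0 hSk
  obtain ⟨j, hj, hyj⟩ := exists_getElem_succ_eq_inl hS hk1 hSk
  have hij : i < j := horder.rel_of_getElem_eq_inl (by omega) hk1 hi hj
  exact ⟨j, mem_Ioc.mpr ⟨(hy i hyi).1.trans_lt hij, (hy j hyj).2⟩, k, hk1, hSk, hj⟩

end Chain

theorem ncard_NIn_le_of_nodup_of_isChain {S : List (Fin n ⊕ Y)} (hnd : S.Nodup)
    (hS : S.IsChain G.toGraph.Adj) (horder : (S.filterMap Sum.getLeft?).Pairwise (· < ·))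
    (hall : ∀ w, w ∈ S) {p q : Fin n} (hp : 0 < p.val) (hq : q.val < n - 1) :
    (G.NIn p q).ncard ≤ q.val - p.val := by
  have : Nonempty (Fin n) := ⟨p⟩
  choose! f hf hsucc using fun y (hy : y ∈ G.NIn p q) =>
    exists_succ_mem_Ioc_of_mem_NIn hS horder hall hp hq hy
  have hinj : Set.InjOn f (G.NIn p q) := by
    intro y₁ hy₁ y₂ hy₂ hf₁₂
    obtain ⟨k₁, hk₁, hy₁k, hf₁⟩ := hsucc y₁ hy₁
    obtain ⟨k₂, hk₂, hy₂k, hf₂⟩ := hsucc y₂ hy₂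
    obtain rfl : k₁ = k₂ := by
      have := hnd.getElem_inj_iff.mp (hf₁.trans (hf₁₂ ▸ hf₂.symm))
      omega
    exact Sum.inr_injective (hy₁k.symm.trans hy₂k)
  calc (G.NIn p q).ncard ≤ (Ioc p q : Set (Fin n)).ncard :=
        Set.ncard_le_ncard_of_injOn f (fun y hy => mem_coe.mpr (hf y hy)) hinj
    _ = q.val - p.val := by rw [Set.ncard_coe_finset, Fin.card_Ioc]

end ConvexBip

theorem stmt_15_general {n : ℕ} {Y : Type*} [DecidableEq Y]
    (G : ConvexBip n Y)
    (u v : Fin n ⊕ Y) (P : G.toGraph.Walk u v) (hham : P.IsHamiltonian)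
    -- the `X`-vertices appear along `P` in the convex order
    (horder : List.Pairwise (· < ·) (P.support.filterMap Sum.getLeft?))
    (p q : Fin n) (hp : 0 < p.val) (hq : q.val < n - 1) :
    (G.NIn p q).ncard ≤ q.val - p.val :=
  G.ncard_NIn_le_of_nodup_of_isChain hham.isPath.support_nodup P.isChain_adj_support horder
    hham.mem_support hp hq

/-- if `G` satisfies Property B and has a Hamiltonian path `P` whose
`X`-vertices appear in the convex order, and `1 < p < q < n` with neither `x_p` nor `x_q`
an endpoint or penultimate vertex of `P`, then `P` contains at most `q - p` vertices of
`N_G[X_{p..q}]` (equivalently, `|N_G[X_{p..q}]| ≤ q - p`, as `P` spans all vertices). -/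
theorem stmt_15 {n : ℕ} {Y : Type*} [Fintype Y] [DecidableEq Y]
    (G : ConvexBip n Y) (hB : G.PropertyB)
    (u v : Fin n ⊕ Y) (P : G.toGraph.Walk u v) (hham : P.IsHamiltonian)
    -- the `X`-vertices appear along `P` in the convex order
    (horder : List.Pairwise (· < ·) (P.support.filterMap Sum.getLeft?))
    (p q : Fin n) (hp : 0 < p.val) (hpq : p < q) (hq : q.val < n - 1)
    -- `x_p` is neither an endpoint nor a penultimate vertex of `P`
    (hpEnd : Sum.inl p ∉ P.support.take 2 ∧ Sum.inl p ∉ P.support.reverse.take 2)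
    (hqEnd : Sum.inl q ∉ P.support.take 2 ∧ Sum.inl q ∉ P.support.reverse.take 2) :
    (G.NIn p q).ncard ≤ q.val - p.val :=
  stmt_15_general G u v P hham horder p q hp hq
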